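/- Let C be a pointed regular category with binary coproducts and Y an object of C. Then Y is a subtractive object if and only if for every morphism f : X → Y, the composite δ_f = [1_X, 0] ∘ ker([f, 1_Y]) : Ker([f, 1_Y]) → X is a regular epimorphism, where [f, 1_Y] : X + Y → Y and [1_X, 0] : X + Y → X denote the morphisms induced on the coproduct. -/

import Mathlib

open CategoryTheory CategoryTheory.Limits

universe v u

variable {C : Type u} [Category.{v} C]

/-- A cospan `(r, s)` is jointly strongly epimorphic: whenever both `r` and `s`
factor through a monomorphism `m`, the monomorphism `m` is an isomorphism. -/
def JointlyStronglyEpi {X Y A : C} (r : X ⟶ A) (s : Y ⟶ A) : Prop :=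
  ∀ ⦃M : C⦄ (m : M ⟶ A), Mono m →
    (∃ r' : X ⟶ M, r' ≫ m = r) → (∃ s' : Y ⟶ M, s' ≫ m = s) → IsIso m

/-- A point `(f, s)` over `B` is strong: for every `g : X ⟶ B`, the second
projection of the pullback of `f` along `g` together with `s` is a jointly
strongly epimorphic pair. -/
def IsStrongPoint [HasPullbacks C] {A B : C} (f : A ⟶ B) (s : B ⟶ A) : Prop :=
  ∀ ⦃X : C⦄ (g : X ⟶ B), JointlyStronglyEpi (pullback.snd g f) s

/-- A point `(f, s)` over `B` is stably strong: every pullback of it along a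
morphism `g : X ⟶ B` is a strong point. -/
def IsStablyStrongPoint [HasPullbacks C] {A B : C} (f : A ⟶ B) (s : B ⟶ A)
    (hs : s ≫ f = 𝟙 B) : Prop :=
  ∀ ⦃X : C⦄ (g : X ⟶ B),
    IsStrongPoint (pullback.fst g f)
      (pullback.lift (𝟙 X) (g ≫ s) (by simp [hs]))

/-- An object `Y` is a Mal'tsev object: for every pullback of split
epimorphisms over `Y`, the two induced sections are jointly strongly
epimorphic. -/
def IsMaltsevObject [HasPullbacks C] (Y : C) : Prop :=
  ∀ ⦃A X : C⦄ (f : A ⟶ Y) (s : Y ⟶ A) (g : X ⟶ Y) (t : Y ⟶ X)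
    (hs : s ≫ f = 𝟙 Y) (ht : t ≫ g = 𝟙 Y),
    JointlyStronglyEpi
      (pullback.lift (𝟙 A) (f ≫ t) (by simp [ht]) : A ⟶ pullback f g)
      (pullback.lift (g ≫ s) (𝟙 X) (by simp [hs]) : X ⟶ pullback f g)

/-- An object `Y` is protomodular: every point over `Y` is stably strong. -/
def IsProtomodularObject [HasPullbacks C] (Y : C) : Prop :=
  ∀ ⦃A : C⦄ (f : A ⟶ Y) (s : Y ⟶ A) (hs : s ≫ f = 𝟙 Y), IsStablyStrongPoint f s hs

/-- `f` is a regular epimorphism. -/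
def IsRegularEpi {X Y : C} (f : X ⟶ Y) : Prop := Nonempty (RegularEpi f)

/-- A commutative square `f' ≫ β = α ≫ f` of regular epimorphisms is a regular
pushout if the comparison morphism into the pullback of `β` and `f` is a
regular epimorphism. -/
def IsRegularPushout [HasPullbacks C] {A' A B' B : C}
    (α : A' ⟶ A) (f' : A' ⟶ B') (f : A ⟶ B) (β : B' ⟶ B)
    (w : f' ≫ β = α ≫ f) : Prop :=
  _root_.IsRegularEpi α ∧ _root_.IsRegularEpi β ∧ _root_.IsRegularEpi f' ∧ _root_.IsRegularEpi f ∧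
    _root_.IsRegularEpi (pullback.lift f' α w)

/-- `Y` is a strongly unital object. -/
def StronglyUnitalObject [HasPullbacks C] [HasBinaryProducts C] (Y : C) : Prop :=
  IsStablyStrongPoint (prod.fst : Y ⨯ Y ⟶ Y) (prod.lift (𝟙 Y) (𝟙 Y)) (prod.lift_fst _ _)

/-- `Y` is a unital object. -/
def UnitalObject [HasPullbacks C] [HasBinaryProducts C] [HasZeroMorphisms C]
    (Y : C) : Prop :=
  IsStablyStrongPoint (prod.fst : Y ⨯ Y ⟶ Y) (prod.lift (𝟙 Y) 0) (prod.lift_fst _ _)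

/-- `Y` is a subtractive object: for every split right punctual span
`(s, f, g, t)` over `Y`, the composite `ker(g) ≫ f` is a regular epimorphism. -/
def SubtractiveObject [HasZeroMorphisms C] [HasKernels C] (Y : C) : Prop :=
  ∀ ⦃X Z : C⦄ (s : X ⟶ Z) (f : Z ⟶ X) (g : Z ⟶ Y) (t : Y ⟶ Z),
    s ≫ f = 𝟙 X → t ≫ g = 𝟙 Y → t ≫ f = 0 →
    _root_.IsRegularEpi (kernel.ι g ≫ f)


/-!
For `f : X ⟶ Y`, the span `(inl, [1_X, 0], [f, 1_Y], inr)` on `X ⨿ Y` is split right punctual,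
and its `ker(g) ≫ f` is `δ_f`. Conversely, every split right punctual span `(s, f, g, t)` over `Y`
receives a morphism from the span attached to `s ≫ g`, so that `δ_{s ≫ g}` factors as
`k ≫ ker(g) ≫ f`. In a regular category regular epimorphisms are the strong ones, and these
cancel on the right, so `ker(g) ≫ f` is a regular epimorphism.
-/

theorem Regular.mk' [HasFiniteLimits C]
    (hcoeq : ∀ {X Y : C} (f : X ⟶ Y),
      HasCoequalizer (pullback.fst f f) (pullback.snd f f))
    (hstab : ∀ {X Y Z : C} (f : X ⟶ Z) (g : Y ⟶ Z),
      _root_.IsRegularEpi f → _root_.IsRegularEpi (pullback.snd f g)) :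
    Regular C where
  hasCoequalizer_of_isKernelPair {_ _ _ f _ _} h :=
    have := hcoeq f
    hasColimit_of_iso (F := parallelPair (pullback.fst f f) (pullback.snd f f))
      (parallelPair.ext h.isoPullback (Iso.refl _))
  regularEpiIsStableUnderBaseChange :=
    .of_forall_exists_isPullback fun f g _ hg =>
      ⟨_, _, _, (IsPullback.of_hasPullback g f).flip, ⟨hstab g f hg.regularEpi⟩⟩

theorem Regular.isRegularEpi_of_comp [Regular C] {X Y Z : C} (f : X ⟶ Y) (g : Y ⟶ Z)
    (hfg : _root_.IsRegularEpi (f ≫ g)) : _root_.IsRegularEpi g :=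
  have : CategoryTheory.IsRegularEpi (f ≫ g) := ⟨hfg⟩
  have : StrongEpi g := strongEpi_of_strongEpi f g
  (inferInstance : CategoryTheory.IsRegularEpi g).regularEpi

section Subtractive

variable [HasZeroMorphisms C] [HasKernels C] [HasBinaryCoproducts C]

noncomputable abbrev coprodDelta {X Y : C} (f : X ⟶ Y) : kernel (coprod.desc f (𝟙 Y)) ⟶ X :=
  kernel.ι (coprod.desc f (𝟙 Y)) ≫ coprod.desc (𝟙 X) 0

theorem SubtractiveObject.isRegularEpi_coprodDelta {Y : C} (hY : SubtractiveObject Y)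
    {X : C} (f : X ⟶ Y) : _root_.IsRegularEpi (coprodDelta f) :=
  hY (coprod.inl : X ⟶ X ⨿ Y) (coprod.desc (𝟙 X) 0) (coprod.desc f (𝟙 Y)) coprod.inr
    (coprod.inl_desc _ _) (coprod.inr_desc _ _) (coprod.inr_desc _ _)

theorem coprodDelta_eq_kernelMap_comp {X Y Z : C} (s : X ⟶ Z) (f : Z ⟶ X) (g : Z ⟶ Y)
    (t : Y ⟶ Z) (hs : s ≫ f = 𝟙 X) (ht : t ≫ g = 𝟙 Y) (htf : t ≫ f = 0) :
    coprodDelta (s ≫ g) =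
      kernel.map _ g (coprod.desc s t) (𝟙 Y) (by ext <;> simp [ht]) ≫ kernel.ι g ≫ f := by
  simp only [coprodDelta, kernel.lift_ι_assoc, Category.assoc]
  congr 1
  ext <;> simp [hs, htf]

theorem subtractiveObject_iff_isRegularEpi_coprodDelta [Regular C] (Y : C) :
    SubtractiveObject Y ↔ ∀ ⦃X : C⦄ (f : X ⟶ Y), _root_.IsRegularEpi (coprodDelta f) := by
  refine ⟨SubtractiveObject.isRegularEpi_coprodDelta, fun hδ X Z s f g t hs ht htf => ?_⟩
  have := coprodDelta_eq_kernelMap_comp s f g t hs ht htf ▸ hδ (s ≫ g)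
  exact Regular.isRegularEpi_of_comp _ _ this

end Subtractive

theorem statement15_general [HasFiniteLimits C] [HasZeroMorphisms C]
    [HasBinaryCoproducts C]
    (hcoeq : ∀ {X Y : C} (f : X ⟶ Y),
      HasCoequalizer (pullback.fst f f) (pullback.snd f f))
    (hstab : ∀ {X Y Z : C} (f : X ⟶ Z) (g : Y ⟶ Z),
      _root_.IsRegularEpi f → _root_.IsRegularEpi (pullback.snd f g))
    (Y : C) :
    SubtractiveObject Y ↔
      ∀ ⦃X : C⦄ (f : X ⟶ Y),
        _root_.IsRegularEpi (kernel.ι (coprod.desc f (𝟙 Y)) ≫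
          coprod.desc (𝟙 X) (0 : Y ⟶ X)) :=
  have := Regular.mk' hcoeq hstab
  subtractiveObject_iff_isRegularEpi_coprodDelta Y

/-- In a pointed regular category with binary coproducts, an object `Y` is
subtractive iff for every `f : X ⟶ Y` the composite
`δ_f = [1_X, 0] ∘ ker([f, 1_Y])` is a regular epimorphism. -/
theorem statement15 [HasFiniteLimits C] [HasZeroObject C] [HasZeroMorphisms C]
    [HasBinaryCoproducts C]
    (hcoeq : ∀ {X Y : C} (f : X ⟶ Y),
      HasCoequalizer (pullback.fst f f) (pullback.snd f f))
    (hstab : ∀ {X Y Z : C} (f : X ⟶ Z) (g : Y ⟶ Z),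
      _root_.IsRegularEpi f → _root_.IsRegularEpi (pullback.snd f g))
    (Y : C) :
    SubtractiveObject Y ↔
      ∀ ⦃X : C⦄ (f : X ⟶ Y),
        _root_.IsRegularEpi (kernel.ι (coprod.desc f (𝟙 Y)) ≫
          coprod.desc (𝟙 X) (0 : Y ⟶ X)) :=
  statement15_general hcoeq hstab Y
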